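/- Let x > 0, V > 0 and let λ ≥ 1 be an integer. For every N > 0 such that 2^λ·Q(x√(N/V)) < 1/2 there is a unique V̂(N) > 0 satisfying 2^λ·Q(x√(N/V)) = Q(x√(N/V̂(N))). Moreover, there exist constants c > 0, C > 0 and N₀ > 0 such that for all N ≥ N₀, c/N ≤ V̂(N) − V ≤ C/N; in particular V̂(N) → V as N → ∞. -/

import Mathlib

open scoped BigOperators

/-- A binary-input discrete channel: a finite output alphabet `Y` and a kernel
`W x y` = probability of output `y` given input `x`. -/
structure PreChannel where
  Y : Type
  [fin : Fintype Y]
  W : Bool → Y → ℝ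

attribute [instance] PreChannel.fin

namespace PreChannel

/-- `W` is a valid binary memoryless symmetric (BMS) channel. -/
def IsBMS (W : PreChannel) : Prop :=
  (∀ x y, 0 ≤ W.W x y) ∧ (∀ x, ∑ y, W.W x y = 1) ∧
    ∃ π : W.Y → W.Y, Function.Involutive π ∧ ∀ y, W.W false (π y) = W.W true y

/-- The polar "minus" transform `W⁻`. -/
noncomputable def minus (W : PreChannel) : PreChannel where
  Y := W.Y × W.Y
  fin := inferInstance
  W := fun u₁ p => ∑ u₂ : Bool, (1 / 2) * W.W (Bool.xor u₁ u₂) p.1 * W.W u₂ p.2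

/-- The polar "plus" transform `W⁺`; output is `(y₁, y₂, u₁)`. -/
noncomputable def plus (W : PreChannel) : PreChannel where
  Y := W.Y × W.Y × Bool
  fin := inferInstance
  W := fun u₂ p => (1 / 2) * W.W (Bool.xor p.2.2 u₂) p.1 * W.W u₂ p.2.1

/-- Capacity `I(W)` (in bits). -/
noncomputable def cap (W : PreChannel) : ℝ :=
  ∑ x : Bool, ∑ y, (1 / 2) * W.W x y *
    Real.logb 2 (W.W x y / ((1 / 2) * W.W false y + (1 / 2) * W.W true y))

/-- Dispersion `V(W)`. -/
noncomputable def disp (W : PreChannel) : ℝ :=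
  (∑ x : Bool, ∑ y, (1 / 2) * W.W x y *
      (Real.logb 2 (W.W x y / ((1 / 2) * W.W false y + (1 / 2) * W.W true y))) ^ 2)
    - cap W ^ 2

/-- Gallager's function `E₀(W, ρ)` (natural logarithm). -/
noncomputable def E0 (W : PreChannel) (ρ : ℝ) : ℝ :=
  - Real.log
      (∑ y, ((1 / 2) * (W.W false y ^ (1 / (1 + ρ)) + W.W true y ^ (1 / (1 + ρ)))) ^ (1 + ρ))

/-- Bhattacharyya parameter `Z(W)`. -/
noncomputable def Zb (W : PreChannel) : ℝ := ∑ y, Real.sqrt (W.W false y * W.W true y)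

/-- `E_x(W, ρ) = −ρ ln[(1 + Z(W)^{1/ρ})/2]`. -/
noncomputable def Ex (W : PreChannel) (ρ : ℝ) : ℝ :=
  - ρ * Real.log ((1 + Zb W ^ (1 / ρ)) / 2)

/-- Random-coding exponent `E_r(W, R)` as an extended real:
`max_{0 ≤ ρ ≤ 1} [E₀(W,ρ) − ρ R ln 2]` for `0 < R ≤ 1`, `+∞` at `R = 0`, `0` for `R > 1`. -/
noncomputable def Er (W : PreChannel) (R : ℝ) : EReal :=
  if R = 0 then ⊤
  else if 1 < R then 0
  else ((sSup {x : ℝ | ∃ ρ ∈ Set.Icc (0 : ℝ) 1, x = E0 W ρ - ρ * R * Real.log 2} : ℝ) : EReal)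

/-- Expurgated exponent `E_ex(W, R) = sup_{ρ ≥ 1} [E_x(W,ρ) − ρ R ln 2]`. -/
noncomputable def Eex (W : PreChannel) (R : ℝ) : EReal :=
  ⨆ ρ : {ρ : ℝ // 1 ≤ ρ}, ((Ex W ρ.1 - ρ.1 * R * Real.log 2 : ℝ) : EReal)

/-- `E(W, R) = max [E_r(W,R), E_ex(W,R)]` for `R ≤ 1`, and `0` for `R > 1`. -/
noncomputable def Echan (W : PreChannel) (R : ℝ) : EReal :=
  if 1 < R then 0 else max (Er W R) (Eex W R)

/-- `E(W, R, N₁) = max [E_r(W,R), E_ex(W, R + 2/N₁)]`. -/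
noncomputable def EchanN (W : PreChannel) (R : ℝ) (N₁ : ℕ) : EReal :=
  max (Er W R) (Eex W (R + 2 / (N₁ : ℝ)))

/-- Sub-channel `Wᵢ` after `lam` polarization steps: the most significant bit of `i`
is applied first, bit `1` = plus, bit `0` = minus. -/
noncomputable def subch : PreChannel → (lam : ℕ) → ℕ → PreChannel
  | W, 0, _ => W
  | W, l + 1, i => subch (if i / 2 ^ l % 2 = 1 then W.plus else W.minus) l (i % 2 ^ l)

/-- `W^s` for a sign sequence `s` (`true` = plus, `false` = minus), applied in order. -/
noncomputable def polarSeq : PreChannel → List Bool → PreChannel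
  | W, [] => W
  | W, b :: rest => polarSeq (if b then W.plus else W.minus) rest

/-- `exp(−t·E)` for `E ∈ [0, +∞]`, with the convention `exp(−∞) = 0`. -/
noncomputable def dexp (t : ℝ) (E : EReal) : ℝ :=
  if E = ⊤ then 0 else Real.exp (-t * E.toReal)

/-- `−ln s` with the convention `−ln 0 = +∞`. -/
noncomputable def nlog (s : ℝ) : EReal :=
  if s ≤ 0 then ⊤ else ((-Real.log s : ℝ) : EReal)

/-- The finite-blocklength exponent `E_λ(W, R, N₁)`:
`(1/(N₁ 2^λ)) · max over admissible rate tuples of −ln Σᵢ exp(−N₁ E(Wᵢ, Rᵢ, N₁))`. -/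
noncomputable def ElamN (W : PreChannel) (lam N₁ : ℕ) (R : ℝ) : EReal :=
  ((1 / ((N₁ : ℝ) * 2 ^ lam) : ℝ) : EReal) *
    sSup {v : EReal | ∃ Rv : Fin (2 ^ lam) → ℝ,
      (∀ i, Rv i ∈ Set.Icc (0 : ℝ) 1 ∧ ∃ k : ℤ, Rv i * (N₁ : ℝ) = (k : ℝ)) ∧
      (∑ i, Rv i) = 2 ^ lam * R ∧
      v = nlog (∑ i : Fin (2 ^ lam), dexp (N₁ : ℝ) (EchanN (subch W lam (i : ℕ)) (Rv i) N₁))}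

/-- The asymptotic exponent `E_λ(W, R)`, defined recursively;
`E_λ(W,R) = 0` for `R > 1` by convention. -/
noncomputable def ElamInf : PreChannel → ℕ → ℝ → EReal
  | W, 0, R => Echan W R
  | W, l + 1, R =>
      if 1 < R then 0
      else ((1 / 2 : ℝ) : EReal) *
        sSup {v : EReal | ∃ R₁ ∈ Set.Icc (max 0 (2 * R - 1)) (min 1 (2 * R)),
          v = min (ElamInf W.minus l R₁) (ElamInf W.plus l (2 * R - R₁))}

/-- `V_λ(W) = (Σᵢ √V(Wᵢ))² / 2^λ`. -/
noncomputable def Vlam (W : PreChannel) (lam : ℕ) : ℝ :=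
  (∑ i ∈ Finset.range (2 ^ lam), Real.sqrt (disp (subch W lam i))) ^ 2 / 2 ^ lam

end PreChannel

/-- Binary entropy function (base 2), with `h2 0 = h2 1 = 0`. -/
noncomputable def h2 (x : ℝ) : ℝ := -x * Real.logb 2 x - (1 - x) * Real.logb 2 (1 - x)

/-- Inverse of the binary entropy function, with values in `[0, 1/2]`. -/
noncomputable def h2inv (v : ℝ) : ℝ := Function.invFunOn h2 (Set.Icc 0 (1 / 2)) v

/-- `ε_h(x) = x − x²`. -/
noncomputable def epsh (x : ℝ) : ℝ := x - x ^ 2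

/-- `ε_l(x) = x − 1 + h₂(h₂⁻¹(1−x)·[2 − 2 h₂⁻¹(1−x)])`. -/
noncomputable def epsl (x : ℝ) : ℝ :=
  x - 1 + h2 (h2inv (1 - x) * (2 - 2 * h2inv (1 - x)))

/-- The binary symmetric channel with crossover probability `p`. -/
noncomputable def BSC (p : ℝ) : PreChannel where
  Y := Bool
  fin := inferInstance
  W := fun x y => if y = x then 1 - p else p

/-- The binary erasure channel with erasure probability `δ` (`none` = erasure). -/
noncomputable def BEC (δ : ℝ) : PreChannel where
  Y := Option Bool
  fin := inferInstance
  W := fun x y => match y with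
    | none => δ
    | some b => if b = x then 1 - δ else 0

/-- The channel-independent lower bound `Ê_λ(I, R)`. -/
noncomputable def Ehat : ℕ → ℝ → ℝ → EReal
  | 0, I, R => PreChannel.Echan (BSC (h2inv (1 - I))) R
  | l + 1, I, R =>
      ((1 / 2 : ℝ) : EReal) *
        sInf {w : EReal | ∃ ε ∈ Set.Icc (epsl I) (epsh I),
          w = sSup {v : EReal | ∃ R₁ ∈ Set.Icc (max 0 (2 * R - 1)) (min 1 (2 * R)),
            v = min (Ehat l (I - ε) R₁) (Ehat l (I + ε) (2 * R - R₁))}}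

/-- The Gaussian Q-function. -/
noncomputable def gaussQ (u : ℝ) : ℝ :=
  ∫ t in Set.Ioi u, (Real.sqrt (2 * Real.pi))⁻¹ * Real.exp (-t ^ 2 / 2)

open PreChannel

/-!
Write `u = x √(N/V)` and `u' = x √(N/V̂)`, so that the defining equation reads
`Q(u') = 2^λ Q(u)` and `V̂ - V = V (u² - u'²) / u'²`. Existence and uniqueness hold because `Q`
is a continuous decreasing bijection from `(0, ∞)` onto `(0, 1/2)`. For the rate,
`(2^λ - 1) Q(u) = ∫_{u'}^{u} φ`; the Mills-ratio bounds `Q(u) ≍ φ(u)/u` and the identity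
`φ(u') = φ(u) e^{(u² - u'²)/2}` pin `u² - u'²` between two positive constants, and `u² = x²N/V`
turns this into `V̂ - V = Θ(1/N)`.
-/

section GaussianTail

open MeasureTheory Real Set Filter Topology ProbabilityTheory

local notation "φ" => gaussianPDFReal 0 1

lemma gaussianPDFReal_zero_one (t : ℝ) : φ t = (√(2 * π))⁻¹ * exp (-t ^ 2 / 2) := by
  simp [gaussianPDFReal]

lemma gaussQ_eq_setIntegral (u : ℝ) : gaussQ u = ∫ t in Ioi u, φ t := by
  simp only [gaussQ, gaussianPDFReal_zero_one]

lemma continuous_gaussianPDFReal_zero_one : Continuous φ := by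
  simp only [funext gaussianPDFReal_zero_one]
  fun_prop

lemma gaussianPDFReal_zero_one_eq_mul_exp (a b : ℝ) :
    φ a = φ b * exp ((b ^ 2 - a ^ 2) / 2) := by
  rw [gaussianPDFReal_zero_one, gaussianPDFReal_zero_one, mul_assoc, ← exp_add]
  congr 2
  ring

lemma gaussianPDFReal_zero_one_le {s t : ℝ} (hs : 0 ≤ s) (hst : s ≤ t) : φ t ≤ φ s := by
  rw [gaussianPDFReal_zero_one_eq_mul_exp t s]
  refine mul_le_of_le_one_right (gaussianPDFReal_nonneg _ _ _) (exp_le_one_iff.2 ?_)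
  nlinarith

lemma hasDerivAt_gaussianPDFReal_zero_one (t : ℝ) : HasDerivAt φ (-t * φ t) t := by
  simp only [funext gaussianPDFReal_zero_one]
  refine (((hasDerivAt_pow 2 t).neg.div_const 2).exp.const_mul (√(2 * π))⁻¹).congr_deriv ?_
  simp only [Pi.neg_apply]
  push_cast
  ring

lemma tendsto_gaussianPDFReal_zero_one_atTop : Tendsto φ atTop (𝓝 0) := by
  simp only [funext gaussianPDFReal_zero_one]
  have hsq : Tendsto (fun t : ℝ => -t ^ 2 / 2) atTop atBot :=
    tendsto_neg_atTop_atBot.comp ((tendsto_pow_atTop two_ne_zero).atTop_div_const two_pos)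
      |>.congr fun t => by simp [neg_div]
  simpa using (tendsto_exp_atBot.comp hsq).const_mul (√(2 * π))⁻¹

lemma mul_gaussianPDFReal_zero_one_le_integral {a b : ℝ} (ha : 0 ≤ a) (hab : a ≤ b) :
    (b - a) * φ b ≤ ∫ t in a..b, φ t := by
  simpa using intervalIntegral.integral_mono_on hab (intervalIntegrable_const (μ := volume))
    (continuous_gaussianPDFReal_zero_one.intervalIntegrable a b)
    fun t ht => gaussianPDFReal_zero_one_le (ha.trans ht.1) ht.2

lemma integral_le_mul_gaussianPDFReal_zero_one {a b : ℝ} (ha : 0 ≤ a) (hab : a ≤ b) :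
    ∫ t in a..b, φ t ≤ (b - a) * φ a := by
  simpa using intervalIntegral.integral_mono_on hab
    (continuous_gaussianPDFReal_zero_one.intervalIntegrable a b)
    (intervalIntegrable_const (μ := volume))
    fun t ht => gaussianPDFReal_zero_one_le ha ht.1

lemma gaussQ_sub_gaussQ (a b : ℝ) : gaussQ a - gaussQ b = ∫ t in a..b, φ t := by
  wlog hab : a ≤ b generalizing a b
  · rw [intervalIntegral.integral_symm, ← this b a (le_of_not_ge hab)]
    ring
  rw [gaussQ_eq_setIntegral, gaussQ_eq_setIntegral, ← Ioc_union_Ioi_eq_Ioi hab,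
    setIntegral_union (Ioc_disjoint_Ioi le_rfl) measurableSet_Ioi
      (integrable_gaussianPDFReal 0 1).integrableOn
      (integrable_gaussianPDFReal 0 1).integrableOn,
    intervalIntegral.integral_of_le hab, add_sub_cancel_right]

lemma gaussQ_strictAnti : StrictAnti gaussQ := fun a b hab => by
  have := intervalIntegral.intervalIntegral_pos_of_pos
    (continuous_gaussianPDFReal_zero_one.intervalIntegrable a b)
    (gaussianPDFReal_pos 0 1 · one_ne_zero) hab
  linarith [gaussQ_sub_gaussQ a b]

lemma gaussQ_pos (u : ℝ) : 0 < gaussQ u := by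
  have : 0 ≤ gaussQ (u + 1) := by
    rw [gaussQ_eq_setIntegral]
    exact setIntegral_nonneg measurableSet_Ioi fun t _ => gaussianPDFReal_nonneg 0 1 t
  linarith [gaussQ_strictAnti (lt_add_one u)]

lemma continuous_gaussQ : Continuous gaussQ := by
  have hprim := intervalIntegral.continuous_primitive
    (continuous_gaussianPDFReal_zero_one.intervalIntegrable (μ := volume)) 0
  convert (continuous_const (y := gaussQ 0)).sub hprim using 1
  ext u
  simp only [Pi.sub_apply]
  linarith [gaussQ_sub_gaussQ 0 u]

lemma gaussQ_zero : gaussQ 0 = 1 / 2 := by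
  have h := integral_gaussian_Ioi (1 / 2)
  rw [gaussQ, integral_const_mul]
  simp only [neg_div, ← one_div_mul_eq_div _ (_ ^ 2), ← neg_mul] at *
  rw [h, show π / (1 / 2) = 2 * π by ring]
  field_simp

lemma setIntegral_mul_gaussianPDFReal_zero_one {u : ℝ} (hu : 0 ≤ u) :
    IntegrableOn (fun t => t * φ t) (Ioi u) ∧ ∫ t in Ioi u, t * φ t = φ u := by
  have hderiv : ∀ t ∈ Ici u, HasDerivAt (fun s => -φ s) (t * φ t) t := fun t _ =>
    (hasDerivAt_gaussianPDFReal_zero_one t).neg.congr_deriv (by ring)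
  have hnonneg : ∀ t ∈ Ioi u, 0 ≤ t * φ t := fun t ht =>
    mul_nonneg (hu.trans ht.out.le) (gaussianPDFReal_nonneg 0 1 t)
  have hlim : Tendsto (fun s => -φ s) atTop (𝓝 0) := by
    simpa using tendsto_gaussianPDFReal_zero_one_atTop.neg
  refine ⟨integrableOn_Ioi_deriv_of_nonneg' hderiv hnonneg hlim, ?_⟩
  simpa using integral_Ioi_of_hasDerivAt_of_nonneg' hderiv hnonneg hlim

lemma gaussQ_le_div {u : ℝ} (hu : 0 < u) : gaussQ u ≤ φ u / u := by
  obtain ⟨hint, hval⟩ := setIntegral_mul_gaussianPDFReal_zero_one hu.le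
  calc gaussQ u ≤ ∫ t in Ioi u, u⁻¹ * (t * φ t) := by
        rw [gaussQ_eq_setIntegral]
        refine setIntegral_mono_on (integrable_gaussianPDFReal 0 1).integrableOn
          (hint.const_mul _) measurableSet_Ioi fun t ht => ?_
        rw [← mul_assoc, ← div_eq_inv_mul]
        exact le_mul_of_one_le_left (gaussianPDFReal_nonneg 0 1 t)
          ((one_le_div hu).2 ht.out.le)
    _ = φ u / u := by rw [integral_const_mul, hval, inv_mul_eq_div]

lemma exp_mul_div_le_gaussQ {u : ℝ} (hu : 1 ≤ u) : exp (-(3 / 2)) * φ u / u ≤ gaussQ u := by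
  have hu0 : 0 < u := one_pos.trans_le hu
  -- on `[u, u + 1/u]` the density drops by at most the factor `e^{-3/2}`
  have hexp : exp (-(3 / 2)) ≤ exp ((u ^ 2 - (u + u⁻¹) ^ 2) / 2) := by
    refine exp_le_exp.2 ?_
    have : u⁻¹ ^ 2 ≤ 1 := pow_le_one₀ (by positivity) (inv_le_one_of_one_le₀ hu)
    nlinarith [mul_inv_cancel₀ hu0.ne']
  calc exp (-(3 / 2)) * φ u / u ≤ (u + u⁻¹ - u) * φ (u + u⁻¹) := by
        rw [gaussianPDFReal_zero_one_eq_mul_exp (u + u⁻¹) u, add_sub_cancel_left,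
          div_eq_inv_mul, mul_comm (exp _)]
        have := gaussianPDFReal_nonneg 0 1 u
        gcongr
    _ ≤ ∫ t in u..u + u⁻¹, φ t :=
        mul_gaussianPDFReal_zero_one_le_integral hu0.le (by simp [hu0.le])
    _ = gaussQ u - gaussQ (u + u⁻¹) := (gaussQ_sub_gaussQ _ _).symm
    _ ≤ gaussQ u := sub_le_self _ (gaussQ_pos _).le

lemma tendsto_gaussQ_atTop : Tendsto gaussQ atTop (𝓝 0) := by
  refine tendsto_of_tendsto_of_tendsto_of_le_of_le' tendsto_const_nhds
    (tendsto_gaussianPDFReal_zero_one_atTop.div_atTop tendsto_id) ?_ ?_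
  · exact Eventually.of_forall fun u => (gaussQ_pos u).le
  · filter_upwards [eventually_gt_atTop 0] with u hu using gaussQ_le_div hu

lemma sq_sub_sq_mem_of_gaussQ_eq_mul {K u u' : ℝ} (hK : 1 < K) (hu : 1 ≤ u) (hu' : 0 < u')
    (h : gaussQ u' = K * gaussQ u) :
    u ^ 2 - u' ^ 2 ∈ Icc ((K - 1) * exp (-(K + 1 / 2))) (2 * (K - 1)) := by
  have hu0 : 0 < u := one_pos.trans_le hu
  have hQ := gaussQ_pos u
  have hφ := gaussianPDFReal_pos 0 1 u one_ne_zero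
  have hlt : u' < u := gaussQ_strictAnti.lt_iff_gt.1 (by nlinarith)
  have hint : (K - 1) * gaussQ u = ∫ t in u'..u, φ t := by
    rw [← gaussQ_sub_gaussQ, h]
    ring
  have hgap_le : u - u' ≤ (K - 1) / u := by
    have : (u - u') * φ u ≤ (K - 1) / u * φ u :=
      calc (u - u') * φ u ≤ (K - 1) * gaussQ u := by
            rw [hint]; exact mul_gaussianPDFReal_zero_one_le_integral hu'.le hlt.le
        _ ≤ (K - 1) * (φ u / u) := by gcongr; exact gaussQ_le_div hu0
        _ = (K - 1) / u * φ u := by ring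
    exact le_of_mul_le_mul_right this hφ
  have hsq_le : u ^ 2 - u' ^ 2 ≤ 2 * (K - 1) := by
    have : u * (u - u') ≤ K - 1 := by rwa [le_div_iff₀' hu0] at hgap_le
    nlinarith
  refine ⟨?_, hsq_le⟩
  have : (K - 1) * exp (-(3 / 2)) * φ u / u ≤ (u - u') * (φ u * exp (K - 1)) :=
    calc (K - 1) * exp (-(3 / 2)) * φ u / u ≤ (K - 1) * gaussQ u := by
          rw [mul_assoc, mul_div_assoc]; gcongr; exact exp_mul_div_le_gaussQ hu
      _ ≤ (u - u') * φ u' := by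
          rw [hint]; exact integral_le_mul_gaussianPDFReal_zero_one hu'.le hlt.le
      _ ≤ (u - u') * (φ u * exp (K - 1)) := by
          rw [gaussianPDFReal_zero_one_eq_mul_exp u' u]
          gcongr
          linarith
  have hexp : exp (-(K + 1 / 2)) = exp (-(3 / 2)) / exp (K - 1) := by
    rw [← exp_sub]; ring_nf
  have hmul : (K - 1) * exp (-(3 / 2)) ≤ u * (u - u') * exp (K - 1) := by
    rw [div_le_iff₀ hu0] at this
    exact le_of_mul_le_mul_right (by linarith) hφ
  have hsq : u * (u - u') ≤ u ^ 2 - u' ^ 2 := by nlinarith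
  rw [hexp, mul_div_assoc', div_le_iff₀ (exp_pos _)]
  exact hmul.trans (mul_le_mul_of_nonneg_right hsq (exp_pos _).le)

lemma mul_sqrt_div_sq (x : ℝ) {N v : ℝ} (hN : 0 ≤ N) (hv : 0 ≤ v) :
    (x * √(N / v)) ^ 2 = x ^ 2 * N / v := by
  rw [mul_pow, sq_sqrt (div_nonneg hN hv), mul_div_assoc]

lemma mul_sqrt_div_div_sq {x N t : ℝ} (hx : 0 < x) (hN : 0 < N) (ht : 0 < t) :
    x * √(N / (x ^ 2 * N / t ^ 2)) = t := by
  rw [show N / (x ^ 2 * N / t ^ 2) = (t / x) ^ 2 by field_simp, sqrt_sq (by positivity)]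
  field_simp

lemma existsUnique_pos_eq_gaussQ {x N y : ℝ} (hx : 0 < x) (hN : 0 < N) (hy : 0 < y)
    (hy' : y < 1 / 2) : ∃! v : ℝ, 0 < v ∧ y = gaussQ (x * √(N / v)) := by
  obtain ⟨T, hT, hQT⟩ :=
    ((eventually_ge_atTop 0).and ((tendsto_order.1 tendsto_gaussQ_atTop).2 y hy)).exists
  obtain ⟨t, ⟨ht, -⟩, hQt⟩ := intermediate_value_Ioo' hT continuous_gaussQ.continuousOn
    ⟨hQT, gaussQ_zero ▸ hy'⟩
  refine ⟨x ^ 2 * N / t ^ 2, ⟨by positivity, by rw [mul_sqrt_div_div_sq hx hN ht, hQt]⟩, ?_⟩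
  rintro v ⟨hv, hyv⟩
  have hvt : x * √(N / v) = t := gaussQ_strictAnti.injective (hyv.symm.trans hQt.symm)
  rw [← hvt, mul_sqrt_div_sq x hN.le hv.le]
  field_simp

lemma sub_mem_of_mul_gaussQ_eq {K x N V Vh : ℝ} (hK : 1 < K) (hN : 0 < N) (hV : 0 < V)
    (hVh : 0 < Vh) (hu : max 1 (4 * (K - 1)) ≤ x * √(N / V))
    (h : K * gaussQ (x * √(N / V)) = gaussQ (x * √(N / Vh))) :
    Vh - V ∈ Icc ((K - 1) * exp (-(K + 1 / 2)) * (V ^ 2 / x ^ 2) / N)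
      (4 * (K - 1) * (V ^ 2 / x ^ 2) / N) := by
  set u := x * √(N / V)
  set u' := x * √(N / Vh)
  obtain ⟨hu1, huK⟩ := max_le_iff.1 hu
  have hx : 0 < x := by nlinarith [sqrt_nonneg (N / V)]
  have hu' : 0 < u' := mul_pos hx (sqrt_pos.2 (div_pos hN hVh))
  obtain ⟨hlow, hupp⟩ := sq_sub_sq_mem_of_gaussQ_eq_mul hK hu1 hu' h.symm
  have hu2 : u ^ 2 = x ^ 2 * N / V := mul_sqrt_div_sq x hN.le hV.le
  have hu'2 : u' ^ 2 = x ^ 2 * N / Vh := mul_sqrt_div_sq x hN.le hVh.le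
  have hV' : V ^ 2 / x ^ 2 / N = V / u ^ 2 := by rw [hu2]; field_simp
  have hVh' : Vh - V = V * (u ^ 2 - u' ^ 2) / u' ^ 2 := by rw [hu2, hu'2]; field_simp
  have hu'2pos : 0 < u' ^ 2 := by positivity
  have hd : 0 ≤ u ^ 2 - u' ^ 2 := (mul_nonneg (by linarith) (exp_pos _).le).trans hlow
  rw [mul_div_assoc, mul_div_assoc, hV', hVh']
  constructor
  · calc (K - 1) * exp (-(K + 1 / 2)) * (V / u ^ 2) ≤ (u ^ 2 - u' ^ 2) * (V / u ^ 2) := by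
          gcongr
      _ ≤ (u ^ 2 - u' ^ 2) * (V / u' ^ 2) :=
          mul_le_mul_of_nonneg_left (div_le_div_of_nonneg_left hV.le hu'2pos (by linarith)) hd
      _ = V * (u ^ 2 - u' ^ 2) / u' ^ 2 := by ring
  · have : u ^ 2 / 2 ≤ u' ^ 2 := by nlinarith
    calc V * (u ^ 2 - u' ^ 2) / u' ^ 2 = (u ^ 2 - u' ^ 2) * (V / u' ^ 2) := by ring
      _ ≤ 2 * (K - 1) * (V / (u ^ 2 / 2)) := by
          gcongr
      _ = 4 * (K - 1) * (V / u ^ 2) := by field_simp; ring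

lemma eventually_sub_mem_of_mul_gaussQ_eq {K x V : ℝ} (hK : 1 < K) (hx : 0 < x)
    (hV : 0 < V) :
    ∀ᶠ N in atTop, K * gaussQ (x * √(N / V)) < 1 / 2 ∧
      ∀ Vh, 0 < Vh → K * gaussQ (x * √(N / V)) = gaussQ (x * √(N / Vh)) →
        Vh - V ∈ Icc ((K - 1) * exp (-(K + 1 / 2)) * (V ^ 2 / x ^ 2) / N)
          (4 * (K - 1) * (V ^ 2 / x ^ 2) / N) := by
  have hu : Tendsto (fun N => x * √(N / V)) atTop atTop :=
    (tendsto_sqrt_atTop.comp (tendsto_id.atTop_div_const hV)).const_mul_atTop hx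
  have hsmall : Tendsto (fun N => K * gaussQ (x * √(N / V))) atTop (𝓝 0) := by
    simpa using (tendsto_gaussQ_atTop.comp hu).const_mul K
  filter_upwards [eventually_gt_atTop 0,
    hsmall.eventually (gt_mem_nhds (one_half_pos : (0 : ℝ) < 1 / 2)),
    hu.eventually_ge_atTop (max 1 (4 * (K - 1)))] with N hN hQ hNu
  exact ⟨hQ, fun Vh hVh h => sub_mem_of_mul_gaussQ_eq hK hN hV hVh hNu h⟩

lemma tendsto_of_sub_mem_div {f : ℝ → ℝ} {V c C : ℝ}
    (h : ∀ᶠ N in atTop, f N - V ∈ Icc (c / N) (C / N)) : Tendsto f atTop (𝓝 V) := by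
  have hlim : ∀ a : ℝ, Tendsto (fun N => V + a / N) atTop (𝓝 V) := fun a => by
    simpa using (tendsto_const_nhds (x := V)).add (tendsto_const_nhds.div_atTop tendsto_id)
  refine tendsto_of_tendsto_of_tendsto_of_le_of_le' (hlim c) (hlim C) ?_ ?_ <;>
    filter_upwards [h] with N hN <;> linarith [hN.1, hN.2]

end GaussianTail

/-- existence, uniqueness and `Θ(1/N)` convergence of `V̂(N)`. -/
theorem stmt16 (x V : ℝ) (hx : 0 < x) (hV : 0 < V) (lam : ℕ) (hlam : 1 ≤ lam) :
    (∀ N : ℝ, 0 < N → (2 : ℝ) ^ lam * gaussQ (x * Real.sqrt (N / V)) < 1 / 2 →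
      ∃! Vh : ℝ, 0 < Vh ∧
        (2 : ℝ) ^ lam * gaussQ (x * Real.sqrt (N / V)) = gaussQ (x * Real.sqrt (N / Vh))) ∧
    ∃ c C N₀ : ℝ, 0 < c ∧ 0 < C ∧ 0 < N₀ ∧
      (∀ N : ℝ, N₀ ≤ N →
        (2 : ℝ) ^ lam * gaussQ (x * Real.sqrt (N / V)) < 1 / 2 ∧
        ∀ Vh : ℝ, 0 < Vh →
          (2 : ℝ) ^ lam * gaussQ (x * Real.sqrt (N / V)) = gaussQ (x * Real.sqrt (N / Vh)) →
          c / N ≤ Vh - V ∧ Vh - V ≤ C / N) ∧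
      (∀ Vhf : ℝ → ℝ,
        (∀ N : ℝ, N₀ ≤ N → 0 < Vhf N ∧
          (2 : ℝ) ^ lam * gaussQ (x * Real.sqrt (N / V)) =
            gaussQ (x * Real.sqrt (N / Vhf N))) →
        Filter.Tendsto Vhf Filter.atTop (nhds V)) := by
  have hK : (1 : ℝ) < 2 ^ lam := one_lt_pow₀ one_lt_two (by omega)
  refine ⟨fun N hN hsmall =>
    existsUnique_pos_eq_gaussQ hx hN (mul_pos (by positivity) (gaussQ_pos _)) hsmall, ?_⟩
  obtain ⟨N₀, hN₀⟩ := Filter.eventually_atTop.1 (eventually_sub_mem_of_mul_gaussQ_eq hK hx hV)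
  have hbounds := fun N (hN : max N₀ 1 ≤ N) => hN₀ N (le_of_max_le_left hN)
  have hK1 := sub_pos.2 hK
  refine ⟨_, _, max N₀ 1, by positivity, by positivity, by positivity, hbounds,
    fun Vhf hVhf => ?_⟩
  exact tendsto_of_sub_mem_div <| Filter.eventually_atTop.2
    ⟨max N₀ 1, fun N hN => (hbounds N hN).2 _ (hVhf N hN).1 (hVhf N hN).2⟩
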